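/- Let A and B be Archimedean f-algebras with unit elements e_A and e_B respectively (and point separating order duals). If T : A → B is a Markov operator that is an extreme point of the convex set of Markov operators from A to B, then T(a²) = (T(a))² for every a ∈ A with a ≥ 0. -/

import Mathlib

/-!
For `0 ≤ c ≤ 1` the operator `R x = T (c x) - T c * T x` makes both `T + R` and `T - R` Markov,
so extremality forces `R = 0`: `T` is multiplicative against every `0 ≤ c ≤ n`. For `0 ≤ a` put
`p = (a - n)⁺`, so that `a - p = a ⊓ n` and `T (a²) - (T a)² = T (p a) - T p * T a`. The f-algebra
identity `(a - n) p = p²` gives `n p ≤ a²`, which bounds `n` times the defect from above by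
`T (a³)` and from below by `-T (a²) * T a`; the Archimedean property of `B` then kills it.
-/

lemma isOrderedRing_of_mul_nonneg {R : Type*} [Ring R] [PartialOrder R] [AddLeftMono R]
    (zero_le_one : (0 : R) ≤ 1) (mul_nonneg : ∀ x y : R, 0 ≤ x → 0 ≤ y → 0 ≤ x * y) :
    IsOrderedRing R :=
  haveI : IsOrderedAddMonoid R :=
    ⟨fun _ _ h c ↦ add_le_add_left h c, fun _ _ h c ↦ add_le_add_right h c⟩
  haveI : ZeroLEOneClass R := ⟨zero_le_one⟩
  IsOrderedRing.of_mul_nonneg mul_nonneg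

lemma eq_zero_of_mem_extremePoints_of_add_mem_of_sub_mem {𝕜 E : Type*} [Field 𝕜] [LinearOrder 𝕜]
    [IsStrictOrderedRing 𝕜] [AddCommGroup E] [Module 𝕜 E] {s : Set E} {x y : E}
    (hx : x ∈ s.extremePoints 𝕜) (hadd : x + y ∈ s) (hsub : x - y ∈ s) : y = 0 := by
  have hmid : x ∈ openSegment 𝕜 (x + y) (x - y) :=
    ⟨1 / 2, 1 / 2, by norm_num, by norm_num, by norm_num, by module⟩
  simpa using hx.2 hadd hsub hmid

namespace FAlgebra

variable {A : Type*} [Ring A] [Lattice A]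

lemma mul_eq_zero_of_inf_eq_zero
    (hf : ∀ x y z : A, 0 ≤ z → x ⊓ y = 0 → (x * z) ⊓ y = 0 ∧ (z * x) ⊓ y = 0)
    {p q : A} (hpq : p ⊓ q = 0) : p * q = 0 := by
  have hp : 0 ≤ p := hpq ▸ inf_le_left
  have hq : 0 ≤ q := hpq ▸ inf_le_right
  have hpq_p : (p * q) ⊓ p = 0 := (hf q p p hp (inf_comm p q ▸ hpq)).2
  simpa using (hf p (p * q) q hq (inf_comm (p * q) p ▸ hpq_p)).1

variable [AddLeftMono A]

lemma negPart_mul_posPart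
    (hf : ∀ x y z : A, 0 ≤ z → x ⊓ y = 0 → (x * z) ⊓ y = 0 ∧ (z * x) ⊓ y = 0) (x : A) :
    x⁻ * x⁺ = 0 :=
  mul_eq_zero_of_inf_eq_zero hf (inf_comm x⁺ x⁻ ▸ posPart_inf_negPart_eq_zero x)

lemma zero_le_one (hmul : ∀ x y : A, 0 ≤ x → 0 ≤ y → 0 ≤ x * y)
    (hf : ∀ x y z : A, 0 ≤ z → x ⊓ y = 0 → (x * z) ⊓ y = 0 ∧ (z * x) ⊓ y = 0) :
    (0 : A) ≤ 1 := by
  have h : (1 : A)⁻ = -((1 : A)⁻ * (1 : A)⁻) :=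
    calc (1 : A)⁻ = 1⁻ * (1⁺ - 1⁻) := by rw [posPart_sub_negPart, mul_one]
      _ = -(1⁻ * 1⁻) := by rw [mul_sub, negPart_mul_posPart hf, zero_sub]
  have hle : (1 : A)⁻ ≤ 0 := h ▸ neg_nonpos.2 (hmul _ _ (negPart_nonneg 1) (negPart_nonneg 1))
  exact negPart_eq_zero.1 (le_antisymm hle (negPart_nonneg 1))

lemma mul_posPart_sub_le (hmul : ∀ x y : A, 0 ≤ x → 0 ≤ y → 0 ≤ x * y)
    (hf : ∀ x y z : A, 0 ≤ z → x ⊓ y = 0 → (x * z) ⊓ y = 0 ∧ (z * x) ⊓ y = 0) (a b : A) :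
    b * (a - b)⁺ ≤ a * (a - b)⁺ := by
  have h : a * (a - b)⁺ - b * (a - b)⁺ = (a - b)⁺ * (a - b)⁺ :=
    calc a * (a - b)⁺ - b * (a - b)⁺ = ((a - b)⁺ - (a - b)⁻) * (a - b)⁺ := by
          rw [posPart_sub_negPart, sub_mul]
      _ = (a - b)⁺ * (a - b)⁺ := by rw [sub_mul, negPart_mul_posPart hf, sub_zero]
  exact sub_nonneg.1 (h ▸ hmul _ _ (posPart_nonneg _) (posPart_nonneg _))

end FAlgebra

def markovOperators (A B : Type*) [Ring A] [PartialOrder A] [Algebra ℝ A] [Ring B] [PartialOrder B]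
    [Algebra ℝ B] : Set (A →ₗ[ℝ] B) :=
  {S | (∀ a : A, 0 ≤ a → 0 ≤ S a) ∧ S 1 = 1}

section Markov

variable {A B : Type*} [Ring A] [PartialOrder A] [IsOrderedRing A] [Algebra ℝ A]
  [Ring B] [PartialOrder B] [IsOrderedRing B] [Algebra ℝ B]
  {T : A →ₗ[ℝ] B}

lemma map_mul_of_mem_extremePoints (hT : T ∈ (markovOperators A B).extremePoints ℝ)
    {c : A} (hc0 : 0 ≤ c) (hc1 : c ≤ 1) (x : A) : T (c * x) = T c * T x := by
  obtain ⟨hTpos, hT1⟩ := hT.1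
  have hTmono : Monotone T := (monotone_iff_map_nonneg T).2 hTpos
  let R : A →ₗ[ℝ] B := T ∘ₗ LinearMap.mulLeft ℝ c - LinearMap.mulLeft ℝ (T c) ∘ₗ T
  have hR : ∀ x, R x = T (c * x) - T c * T x := fun _ ↦ rfl
  have hadd : T + R ∈ markovOperators A B := by
    refine ⟨fun x hx ↦ ?_, by simp [hR, hT1]⟩
    have h : (T + R) x = T (c * x) + (1 - T c) * T x := by
      simp only [LinearMap.add_apply, hR]
      noncomm_ring
    rw [h]
    exact add_nonneg (hTpos _ (mul_nonneg hc0 hx))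
      (mul_nonneg (sub_nonneg.2 (hT1 ▸ hTmono hc1)) (hTpos x hx))
  have hsub : T - R ∈ markovOperators A B := by
    refine ⟨fun x hx ↦ ?_, by simp [hR, hT1]⟩
    have h : (T - R) x = T ((1 - c) * x) + T c * T x := by
      simp only [LinearMap.sub_apply, hR, sub_mul, one_mul, map_sub]
      abel
    rw [h]
    exact add_nonneg (hTpos _ (mul_nonneg (sub_nonneg.2 hc1) hx))
      (mul_nonneg (hTpos c hc0) (hTpos x hx))
  have hR0 : R = 0 := eq_zero_of_mem_extremePoints_of_add_mem_of_sub_mem hT hadd hsub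
  exact sub_eq_zero.1 ((hR x).symm.trans (LinearMap.congr_fun hR0 x))

lemma map_mul_of_mem_extremePoints_of_le_natCast [PosSMulMono ℝ A]
    (hT : T ∈ (markovOperators A B).extremePoints ℝ) {c : A} {n : ℕ} (hc0 : 0 ≤ c)
    (hcn : c ≤ n) (x : A) : T (c * x) = T c * T x := by
  rcases Nat.eq_zero_or_pos n with rfl | hn
  · simp [le_antisymm (by simpa using hcn) hc0]
  have hn' : (n : ℝ) ≠ 0 := by positivity
  obtain ⟨c', hc'0, hc'1, rfl⟩ : ∃ c', 0 ≤ c' ∧ c' ≤ 1 ∧ c = (n : ℝ) • c' := by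
    refine ⟨(n : ℝ)⁻¹ • c, smul_nonneg (by positivity) hc0, ?_, (smul_inv_smul₀ hn' c).symm⟩
    calc (n : ℝ)⁻¹ • c ≤ (n : ℝ)⁻¹ • (n : A) := smul_le_smul_of_nonneg_left hcn (by positivity)
      _ = 1 := by
        rw [← map_natCast (algebraMap ℝ A), Algebra.smul_def, ← map_mul, inv_mul_cancel₀ hn',
          map_one]
  rw [smul_mul_assoc, map_smul, map_smul, smul_mul_assoc, map_mul_of_mem_extremePoints hT hc'0 hc'1]

end Markov

lemma map_mul_self_of_mem_extremePoints {A B : Type*} [Ring A] [Lattice A] [IsOrderedRing A]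
    [Algebra ℝ A] [PosSMulMono ℝ A] [Ring B] [PartialOrder B] [IsOrderedRing B] [Algebra ℝ B]
    (hf : ∀ x y z : A, 0 ≤ z → x ⊓ y = 0 → (x * z) ⊓ y = 0 ∧ (z * x) ⊓ y = 0)
    (harch : ∀ x y : B, (∀ n : ℕ, n • x ≤ y) → x ≤ 0)
    {T : A →ₗ[ℝ] B} (hT : T ∈ (markovOperators A B).extremePoints ℝ) {a : A} (ha : 0 ≤ a) :
    T (a * a) = T a * T a := by
  have hTpos := hT.1.1
  have hTmono : Monotone T := (monotone_iff_map_nonneg T).2 hTpos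
  set d := T (a * a) - T a * T a
  have bounds : ∀ n : ℕ, n • d ≤ T (a * a * a) ∧ n • (-d) ≤ T (a * a) * T a := by
    intro n
    set p := (a - n)⁺
    have hp0 : 0 ≤ p := posPart_nonneg _
    have hpa : p ≤ a := sup_le (sub_le_self _ n.cast_nonneg) ha
    have hnp : (n : A) * p ≤ a * a :=
      (FAlgebra.mul_posPart_sub_le (fun _ _ ↦ mul_nonneg) hf a n).trans
        (mul_le_mul_of_nonneg_left hpa ha)
    have hd : d = T (p * a) - T p * T a := by
      have h := map_mul_of_mem_extremePoints_of_le_natCast hT (sub_nonneg.2 hpa)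
        (sub_le_comm.1 (le_posPart (a - n))) a
      rw [sub_mul, map_sub, map_sub, sub_mul] at h
      exact sub_eq_sub_iff_sub_eq_sub.1 h
    constructor
    · calc n • d ≤ n • T (p * a) :=
            nsmul_le_nsmul_right (hd ▸ sub_le_self _ (mul_nonneg (hTpos p hp0) (hTpos a ha))) n
        _ = T ((n : A) * p * a) := by rw [← map_nsmul, nsmul_eq_mul, mul_assoc]
        _ ≤ T (a * a * a) := hTmono (mul_le_mul_of_nonneg_right hnp ha)
    · calc n • (-d) ≤ n • (T p * T a) := by
            refine nsmul_le_nsmul_right ?_ n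
            rw [hd, neg_sub]
            exact sub_le_self _ (hTpos _ (mul_nonneg hp0 ha))
        _ = T ((n : A) * p) * T a := by rw [← nsmul_eq_mul, map_nsmul, smul_mul_assoc]
        _ ≤ T (a * a) * T a := mul_le_mul_of_nonneg_right (hTmono hnp) (hTpos a ha)
  have hd0 : d = 0 := le_antisymm (harch d _ fun n ↦ (bounds n).1)
    (neg_nonpos.1 (harch (-d) _ fun n ↦ (bounds n).2))
  exact sub_eq_zero.1 hd0

theorem stmt_13_general
    {A B : Type*}
    [Ring A] [Lattice A] [Algebra ℝ A] [CovariantClass A A (· + ·) (· ≤ ·)]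
    -- A is a Riesz space (vector lattice) over ℝ
    (hsmulA : ∀ (r : ℝ) (x : A), 0 ≤ r → 0 ≤ x → 0 ≤ r • x)
    -- A is a lattice-ordered algebra
    (hmulA : ∀ x y : A, 0 ≤ x → 0 ≤ y → 0 ≤ x * y)
    -- the f-algebra condition
    (hfA : ∀ x y z : A, 0 ≤ z → x ⊓ y = 0 → (x * z) ⊓ y = 0 ∧ (z * x) ⊓ y = 0)
    [Ring B] [Lattice B] [Algebra ℝ B] [CovariantClass B B (· + ·) (· ≤ ·)]
    -- B is a lattice-ordered algebra
    (hmulB : ∀ x y : B, 0 ≤ x → 0 ≤ y → 0 ≤ x * y)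
    -- B is Archimedean
    (harchB : ∀ x y : B, (∀ n : ℕ, n • x ≤ y) → x ≤ 0)
    (T : A →ₗ[ℝ] B)
    (hext : T ∈ Set.extremePoints ℝ {S : A →ₗ[ℝ] B | (∀ a : A, 0 ≤ a → 0 ≤ S a) ∧ S 1 = 1}) :
    ∀ a : A, 0 ≤ a → T (a * a) = T a * T a := by
  have : IsOrderedRing A := isOrderedRing_of_mul_nonneg (FAlgebra.zero_le_one hmulA hfA) hmulA
  have : PosSMulMono ℝ A := PosSMulMono.of_smul_nonneg fun r hr x hx ↦ hsmulA r x hr hx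
  have : IsOrderedRing B := isOrderedRing_of_mul_nonneg (hext.1.2 ▸ hext.1.1 1 zero_le_one) hmulB
  exact fun a ha ↦ map_mul_self_of_mem_extremePoints hfA harchB hext ha

/-- If a Markov operator `T` between unital Archimedean `f`-algebras with point
separating order duals is an extreme point of the set of Markov operators, then
`T (a²) = (T a)²` for every `0 ≤ a`. -/
theorem stmt_13
    {A B : Type*}
    [Ring A] [Lattice A] [Algebra ℝ A] [CovariantClass A A (· + ·) (· ≤ ·)]
    -- A is a Riesz space (vector lattice) over ℝ
    (hsmulA : ∀ (r : ℝ) (x : A), 0 ≤ r → 0 ≤ x → 0 ≤ r • x)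
    -- A is a lattice-ordered algebra
    (hmulA : ∀ x y : A, 0 ≤ x → 0 ≤ y → 0 ≤ x * y)
    -- the f-algebra condition
    (hfA : ∀ x y z : A, 0 ≤ z → x ⊓ y = 0 → (x * z) ⊓ y = 0 ∧ (z * x) ⊓ y = 0)
    -- A is Archimedean
    (harchA : ∀ x y : A, (∀ n : ℕ, n • x ≤ y) → x ≤ 0)
    -- the order dual of A separates the points of A
    (hsepA : ∀ x : A, x ≠ 0 → ∃ f : A →ₗ[ℝ] ℝ, Monotone f ∧ f x ≠ 0)
    [Ring B] [Lattice B] [Algebra ℝ B] [CovariantClass B B (· + ·) (· ≤ ·)]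
    -- B is a Riesz space (vector lattice) over ℝ
    (hsmulB : ∀ (r : ℝ) (x : B), 0 ≤ r → 0 ≤ x → 0 ≤ r • x)
    -- B is a lattice-ordered algebra
    (hmulB : ∀ x y : B, 0 ≤ x → 0 ≤ y → 0 ≤ x * y)
    -- the f-algebra condition
    (hfB : ∀ x y z : B, 0 ≤ z → x ⊓ y = 0 → (x * z) ⊓ y = 0 ∧ (z * x) ⊓ y = 0)
    -- B is Archimedean
    (harchB : ∀ x y : B, (∀ n : ℕ, n • x ≤ y) → x ≤ 0)
    -- the order dual of B separates the points of B
    (hsepB : ∀ x : B, x ≠ 0 → ∃ f : B →ₗ[ℝ] ℝ, Monotone f ∧ f x ≠ 0)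
    (T : A →ₗ[ℝ] B)
    -- T is a Markov operator
    (hTpos : ∀ a : A, 0 ≤ a → 0 ≤ T a) (hT1 : T 1 = 1)
    (hext : T ∈ Set.extremePoints ℝ {S : A →ₗ[ℝ] B | (∀ a : A, 0 ≤ a → 0 ≤ S a) ∧ S 1 = 1}) :
    ∀ a : A, 0 ≤ a → T (a * a) = T a * T a :=
  stmt_13_general hsmulA hmulA hfA hmulB harchB T hext
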